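/- Let μ be a Borel probability measure on a Polish space S and let u : S → ℝ be Borel measurable with u = 0 μ-almost everywhere. Then for every α ∈ (0,2) and any Borel probability kernel ν(·, dy) from S to ℝ, the quantity ∫_S ∫_ℝ 1_{y ≠ x_i} (u(x with i-th coordinate replaced by y) − u(x))² / |y − x_i|^{2α+1} ν(x, dy) μ(dx) vanishes, provided the off-diagonal singular kernel is interpreted via the monotone limits over {ε < |x_i − y|} ∩ K with K compact. -/
import Mathlib


open MeasureTheory ProbabilityTheory

/-- The sub-σ-field `σ_{i^c}` of `ℝ^ℕ` generated by all coordinates other than `i`. -/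
def sigmaIc (i : ℕ) : MeasurableSpace (ℕ → ℝ) :=
  MeasurableSpace.comap (fun x => (fun j : {j : ℕ // j ≠ i} => x j.1)) inferInstance


lemma sigmaIc_le (i : ℕ) : sigmaIc i ≤ MeasurableSpace.pi := by
  have : Measurable (fun x : ℕ → ℝ => (fun j : {j : ℕ // j ≠ i} => x j.1)) :=
    measurable_pi_lambda _ (fun j => measurable_pi_apply _)
  exact MeasurableSpace.comap_le_iff_le_map.mpr fun s hs => this hs

lemma measurable_update_fn (i : ℕ) :
    Measurable (fun p : (ℕ → ℝ) × ℝ => Function.update p.1 i p.2) := by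
  apply measurable_pi_lambda
  intro j
  simp only [Function.update_apply]
  by_cases h : j = i
  · simp [h]; exact measurable_snd
  · simp [h]; exact measurable_fst.eval

lemma measurable_slice (i : ℕ) (ν : Kernel (ℕ → ℝ) ℝ) [IsSFiniteKernel ν]
    {N : Set (ℕ → ℝ)} (hN : MeasurableSet N) :
    Measurable (fun x => ν x {y | Function.update x i y ∈ N}) := by
  have hs : MeasurableSet ((fun p : (ℕ → ℝ) × ℝ => Function.update p.1 i p.2) ⁻¹' N) :=
    (measurable_update_fn i) hN
  exact Kernel.measurable_kernel_prodMk_left (κ := ν) hs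

/-- The π-system of product-type sets. -/
def rectSys (i : ℕ) : Set (Set (ℕ → ℝ)) :=
  {s | ∃ A : Set ℝ, MeasurableSet A ∧ ∃ B : Set (ℕ → ℝ), MeasurableSet[sigmaIc i] B ∧
    s = {x | x i ∈ A} ∩ B}

lemma isPiSystem_rectSys (i : ℕ) : IsPiSystem (rectSys i) := by
  rintro s ⟨A₁, hA₁, B₁, hB₁, rfl⟩ t ⟨A₂, hA₂, B₂, hB₂, rfl⟩ -
  refine ⟨A₁ ∩ A₂, hA₁.inter hA₂, B₁ ∩ B₂, hB₁.inter hB₂, ?_⟩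
  ext x; simp [Set.mem_inter_iff]; tauto

lemma pi_eq_generateFrom_rectSys (i : ℕ) :
    (MeasurableSpace.pi : MeasurableSpace (ℕ → ℝ)) = MeasurableSpace.generateFrom (rectSys i) := by
  apply le_antisymm
  · rw [MeasurableSpace.pi]
    refine iSup_le fun j => ?_
    refine Measurable.comap_le (m₁ := MeasurableSpace.generateFrom (rectSys i)) ?_
    intro A hA
    apply MeasurableSpace.measurableSet_generateFrom
    by_cases hj : j = i
    · subst hj
      exact ⟨A, hA, Set.univ, MeasurableSet.univ, by ext x; simp⟩
    · refine ⟨Set.univ, MeasurableSet.univ,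
        (fun x : ℕ → ℝ => (fun j : {j : ℕ // j ≠ i} => x j.1)) ⁻¹'
          {g | g ⟨j, hj⟩ ∈ A}, ⟨_, measurable_pi_apply (⟨j, hj⟩ : {j : ℕ // j ≠ i}) hA, rfl⟩, ?_⟩
      ext x; simp [Set.preimage]
  · refine MeasurableSpace.generateFrom_le ?_
    rintro s ⟨A, hA, B, hB, rfl⟩
    exact ((measurable_pi_apply i) hA).inter (sigmaIc_le i _ hB)

lemma slice_measurableSet (i : ℕ) (x : ℕ → ℝ) {N : Set (ℕ → ℝ)} (hN : MeasurableSet N) :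
    MeasurableSet {y | Function.update x i y ∈ N} := by
  have : Measurable fun y : ℝ => Function.update x i y := measurable_update x
  exact this hN

lemma key (μ : Measure (ℕ → ℝ)) [IsProbabilityMeasure μ] (i : ℕ)
    (ν : Kernel (ℕ → ℝ) ℝ) [IsMarkovKernel ν]
    (hdis : ∀ A : Set ℝ, MeasurableSet A → ∀ B : Set (ℕ → ℝ), MeasurableSet[sigmaIc i] B →
      μ ({x | x i ∈ A} ∩ B) = ∫⁻ x in B, ν x A ∂μ) :
    ∀ ⦃N : Set (ℕ → ℝ)⦄, MeasurableSet N →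
      ∫⁻ x, ν x {y | Function.update x i y ∈ N} ∂μ = μ N := by
  refine MeasurableSpace.induction_on_inter (pi_eq_generateFrom_rectSys i)
    (isPiSystem_rectSys i) ?_ ?_ ?_ ?_
  · simp
  · rintro s ⟨A, hA, B, hB, rfl⟩
    obtain ⟨B', hB', rfl⟩ := hB
    set f := fun x : ℕ → ℝ => (fun j : {j : ℕ // j ≠ i} => x j.1) with hf
    have hff : ∀ x y, f (Function.update x i y) = f x := by
      intro x y; funext j; exact Function.update_of_ne j.2 _ _
    have heq : (fun x => ν x {y | Function.update x i y ∈ {x | x i ∈ A} ∩ f ⁻¹' B'}) =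
        (f ⁻¹' B').indicator (fun x => ν x A) := by
      funext x
      by_cases hx : x ∈ f ⁻¹' B'
      · rw [Set.indicator_of_mem hx]
        congr 1
        ext y
        simp only [Set.mem_inter_iff, Set.mem_setOf_eq, Set.mem_preimage, hff,
          Function.update_self]
        exact ⟨fun h => h.1, fun h => ⟨h, hx⟩⟩
      · rw [Set.indicator_of_notMem hx]
        convert measure_empty (μ := ν x)
        simp only [Set.mem_preimage] at hx
        ext y
        simp only [Set.mem_inter_iff, Set.mem_setOf_eq, Set.mem_preimage, hff,
          Function.update_self, Set.mem_empty_iff_false, iff_false]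
        tauto
    rw [heq]
    rw [show lintegral μ ((f ⁻¹' B').indicator fun x => (ν x) A) =
        ∫⁻ x, (f ⁻¹' B').indicator (fun x => (ν x) A) x ∂μ from rfl,
      lintegral_indicator (sigmaIc_le i _ ⟨B', hB', rfl⟩) (fun x => (ν x) A),
      ← hdis A hA _ ⟨B', hB', rfl⟩]
  · intro t ht hC
    have hm := measurable_slice i ν ht
    have hb : (fun x => ν x {y | Function.update x i y ∈ tᶜ}) =
        fun x => 1 - ν x {y | Function.update x i y ∈ t} := by
      funext x
      have : {y | Function.update x i y ∈ tᶜ} = {y | Function.update x i y ∈ t}ᶜ := rfl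
      rw [this, measure_compl (slice_measurableSet i x ht) (measure_ne_top _ _), measure_univ]
    rw [hb, lintegral_sub hm]
    · rw [lintegral_one, measure_univ, hC,
        measure_compl ht (measure_ne_top _ _), measure_univ]
    · rw [hC]; exact measure_ne_top _ _
    · exact Filter.Eventually.of_forall fun x => prob_le_one
  · intro g hdisj hmeas hC
    have hb : (fun x => ν x {y | Function.update x i y ∈ ⋃ n, g n}) =
        fun x => ∑' n, ν x {y | Function.update x i y ∈ g n} := by
      funext x
      have : {y | Function.update x i y ∈ ⋃ n, g n} =
          ⋃ n, {y | Function.update x i y ∈ g n} := by ext y; simp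
      rw [this, measure_iUnion ?_ (fun n => slice_measurableSet i x (hmeas n))]
      intro m n hmn
      exact Set.disjoint_left.mpr fun y hym hyn =>
        Set.disjoint_left.mp (hdisj hmn) hym hyn
    rw [hb, lintegral_tsum (fun n => (measurable_slice i ν (hmeas n)).aemeasurable),
      measure_iUnion hdisj hmeas]
    exact tsum_congr fun n => hC n

/-- If `u = 0` μ-a.e., then for `α ∈ (0,2)` and a Markov kernel `ν(x,dy)`
which is `σ_{i^c}`-measurable and disintegrates `μ` over the i-th coordinate, the
individually adapted form vanishes:
`∬ 1_{y ≠ x_i} (u(x with i-th coord y) − u(x))² / |y − x_i|^{2α+1} ν(x,dy) μ(dx) = 0`. -/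
theorem stmt9 (μ : Measure (ℕ → ℝ)) [IsProbabilityMeasure μ]
    (i : ℕ) (α : ℝ) (hα : α ∈ Set.Ioo (0:ℝ) 2)
    (ν : Kernel (ℕ → ℝ) ℝ) [IsMarkovKernel ν]
    (hνmeas : ∀ A : Set ℝ, MeasurableSet A → Measurable[sigmaIc i] fun x => ν x A)
    (hdis : ∀ A : Set ℝ, MeasurableSet A → ∀ B : Set (ℕ → ℝ), MeasurableSet[sigmaIc i] B →
      μ ({x | x i ∈ A} ∩ B) = ∫⁻ x in B, ν x A ∂μ)
    (u : (ℕ → ℝ) → ℝ) (hu_meas : Measurable u) (hu : ∀ᵐ x ∂μ, u x = 0) :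
    ∫⁻ x, (∫⁻ y, Set.indicator {y : ℝ | y ≠ x i}
        (fun y => ENNReal.ofReal
          ((u (Function.update x i y) - u x) ^ 2 / |y - x i| ^ (2 * α + 1))) y
      ∂(ν x)) ∂μ = 0 := by
  have hN : MeasurableSet {x : ℕ → ℝ | u x ≠ 0} := hu_meas (measurableSet_singleton 0).compl
  have hμN : μ {x : ℕ → ℝ | u x ≠ 0} = 0 := ae_iff.mp hu
  have hkey := key μ i ν hdis hN
  rw [hμN] at hkey
  have h0 : ∀ᵐ x ∂μ, ν x {y | Function.update x i y ∈ {x : ℕ → ℝ | u x ≠ 0}} = 0 :=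
    (lintegral_eq_zero_iff (measurable_slice i ν hN)).mp hkey
  refine (lintegral_congr_ae ?_).trans lintegral_zero
  filter_upwards [h0, hu] with x hx hux
  have hae : ∀ᵐ y ∂(ν x), u (Function.update x i y) = 0 := by
    rw [ae_iff]
    exact hx
  refine (lintegral_congr_ae ?_).trans lintegral_zero
  filter_upwards [hae] with y hy
  simp [Set.indicator_apply, hy, hux]
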